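/- arXiv:2512.18825 — 2 statements merged into one kernel-verified Lean document; each statement's English description precedes it below -/
import Mathlib

section
/- Let K be a number field, let X/K be a complete nonsingular curve of genus 0 or 1, let f : X → X be a morphism of degree d ≥ 2 defined over K, and let α ∈ X(K). Let K′/K be a finite extension, and let G_{f,α} and G′_{f,α} denote the images of the arboreal Galois representations of the pair (f,α) over the base fields K and K′ respectively. Then dim_lower(G′_{f,α}) = dim_lower(G_{f,α}) and dim_upper(G′_{f,α}) = dim_upper(G_{f,α}). -/
open scoped Classical

noncomputable section

/-! ### Minkowski dimension machinery for groups of automorphisms of rooted trees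

A rooted tree is presented by its levels `V 0, V 1, V 2, …` (with `V 0` the root level)
together with parent maps `V (n+1) → V n`.  An automorphism is a family of permutations
of the levels commuting with the parent maps; it is in particular determined by a point of
`∀ k, Equiv.Perm (V k)`.  The restriction `r_n σ` of `σ` to the height-`n` subtree is the
tuple `(σ 0, …, σ n)`, and the natural metric is
`d(σ,τ) = inf { d!^{-(dⁿ-1)/(d-1)} : r_n σ = r_n τ }`. -/

/-- The exponent `(dⁿ - 1)/(d - 1) = 1 + d + ⋯ + d^(n-1)`. -/
def scaleExp (d n : ℕ) : ℕ := ∑ i ∈ Finset.range n, d ^ i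

/-- The scale `ε_n = d!^{-(dⁿ-1)/(d-1)}`, i.e. `1/|Aut(Tₙᶜᵒᵐ)|`. -/
def treeScale (d n : ℕ) : ℝ := ((d.factorial : ℝ) ^ scaleExp d n)⁻¹

/-- Two families of level permutations restrict to the same automorphism of the
height-`n` subtree. -/
def AgreeUpTo {V : ℕ → Type*} (n : ℕ) (σ τ : ∀ k, Equiv.Perm (V k)) : Prop :=
  ∀ k, k ≤ n → σ k = τ k

/-- The natural metric on automorphisms of a rooted `d`-ary tree:
`d(σ,τ) = inf { d!^{-(dⁿ-1)/(d-1)} : σ and τ agree on the height-n subtree }`. -/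
def treeDist {V : ℕ → Type*} (d : ℕ) (σ τ : ∀ k, Equiv.Perm (V k)) : ℝ :=
  sInf {x : ℝ | ∃ n : ℕ, AgreeUpTo n σ τ ∧ x = treeScale d n}

/-- `N_{ε_n}(G)`: the least number of balls of radius `ε_n = treeScale d n` needed to
cover `G`. -/
def coverNum {V : ℕ → Type*} (d : ℕ) (G : Set (∀ k, Equiv.Perm (V k))) (n : ℕ) : ℕ :=
  sInf {m : ℕ | ∃ s : Finset (∀ k, Equiv.Perm (V k)), s.card = m ∧
    G ⊆ ⋃ σ ∈ s, {τ | treeDist d σ τ ≤ treeScale d n}}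

/-- The lower Minkowski dimension `liminf_{ε → 0} log N_ε(G) / log (1/ε)` (computed
along the scales `ε_n` of the metric). -/
def dimLower {V : ℕ → Type*} (d : ℕ) (G : Set (∀ k, Equiv.Perm (V k))) : ℝ :=
  Filter.liminf
    (fun n : ℕ => Real.log (coverNum d G n : ℝ) / Real.log (1 / treeScale d n)) Filter.atTop

/-- The upper Minkowski dimension `limsup_{ε → 0} log N_ε(G) / log (1/ε)` (computed
along the scales `ε_n` of the metric). -/
def dimUpper {V : ℕ → Type*} (d : ℕ) (G : Set (∀ k, Equiv.Perm (V k))) : ℝ :=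
  Filter.limsup
    (fun n : ℕ => Real.log (coverNum d G n : ℝ) / Real.log (1 / treeScale d n)) Filter.atTop

/-- The Minkowski dimension of `G` exists and equals `x`. -/
def HasDim {V : ℕ → Type*} (d : ℕ) (G : Set (∀ k, Equiv.Perm (V k))) (x : ℝ) : Prop :=
  dimLower d G = x ∧ dimUpper d G = x

/-- `G` is closed for the natural metric. -/
def IsDistClosed {V : ℕ → Type*} (d : ℕ) (G : Set (∀ k, Equiv.Perm (V k))) : Prop :=
  ∀ σ, (∀ ε : ℝ, 0 < ε → ∃ τ ∈ G, treeDist d σ τ ≤ ε) → σ ∈ G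

/-- The closure of `G` for the natural metric. -/
def distClosure {V : ℕ → Type*} (d : ℕ) (G : Set (∀ k, Equiv.Perm (V k))) :
    Set (∀ k, Equiv.Perm (V k)) :=
  {σ | ∀ ε : ℝ, 0 < ε → ∃ τ ∈ G, treeDist d σ τ ≤ ε}

/-- `|r_n(G)|`: the cardinality of the restriction of `G` to the height-`n` subtree. -/
def levelCard {V : ℕ → Type*} (G : Set (∀ k, Equiv.Perm (V k))) (n : ℕ) : ℕ :=
  Nat.card ((fun (σ : ∀ k, Equiv.Perm (V k)) (k : Fin (n + 1)) => σ k.1) '' G)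

end
noncomputable section

/-- A fixed algebraic closure `K̄` of `K`. -/
abbrev Kbar (K : Type*) [Field K] : Type _ := AlgebraicClosure K

/-- The level-`n` vertices of the preimage tree of `α` under `φ`: the set
`φ^{-n}(α)`. -/
abbrev preV {Pts : Type*} (φ : Pts → Pts) (α : Pts) (n : ℕ) : Type _ :=
  {β : Pts // φ^[n] β = α}

/-- The parent map of the preimage tree: a vertex `β ∈ φ^{-(n+1)}(α)` is joined to
`φ(β) ∈ φ^{-n}(α)`. -/
def preParent {Pts : Type*} (φ : Pts → Pts) (α : Pts) (n : ℕ)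
    (β : preV φ α (n + 1)) : preV φ α n :=
  ⟨φ β.1, by have h := β.2; rwa [Function.iterate_succ_apply] at h⟩

/-- The image `G_{φ,α}` of the arboreal Galois representation attached to `(φ, α)` over
the base field `L` (an intermediate field of `K̄/K`): the set of families of level
permutations of the preimage tree induced by elements of `Gal(K̄/L)`, acting on points
via `act`. -/
def arbGal {K : Type*} [Field K] {Pts : Type*}
    (act : (Kbar K ≃ₐ[K] Kbar K) → Pts → Pts) (L : IntermediateField K (Kbar K))
    (φ : Pts → Pts) (α : Pts) : Set (∀ n, Equiv.Perm (preV φ α n)) :=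
  {g | ∃ σ : Kbar K ≃ₐ[K] Kbar K, (∀ x ∈ L, σ x = x) ∧
    ∀ (n : ℕ) (β : preV φ α n), (g n β : Pts) = act σ (β : Pts)}

end
noncomputable section

/-- A complete nonsingular curve `X` over the number field `K`, presented through its
set of `K̄`-points: the natural action of `Gal(K̄/K)` on `X(K̄)`, and the field of
definition `K(P)` of each point, characterized by the property that an automorphism
of `K̄/K` fixes `P` if and only if it fixes `K(P)` pointwise. -/
structure CurveOverK (K : Type*) [Field K] [NumberField K] where
  Pts : Type*
  genus : ℕ
  act : (Kbar K ≃ₐ[K] Kbar K) →* Equiv.Perm Pts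
  fod : Pts → IntermediateField K (Kbar K)
  fod_fin : ∀ P : Pts, FiniteDimensional K (fod P)
  fod_spec : ∀ (σ : Kbar K ≃ₐ[K] Kbar K) (P : Pts), act σ P = P ↔ ∀ x ∈ fod P, σ x = x

/-- A morphism `f : X → X` of degree `d` defined over `K`, presented through its action
on `X(K̄)`: it commutes with the Galois action, and each fiber is finite and nonempty
with at most `d` points. -/
structure CurveMor {K : Type*} [Field K] [NumberField K] (X : CurveOverK K) (d : ℕ) where
  toFun : X.Pts → X.Pts
  equivariant : ∀ (σ : Kbar K ≃ₐ[K] Kbar K) (P : X.Pts),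
    toFun (X.act σ P) = X.act σ (toFun P)
  fiber_lb : ∀ P : X.Pts, 1 ≤ Nat.card {Q : X.Pts // toFun Q = P}
  fiber_ub : ∀ P : X.Pts, Nat.card {Q : X.Pts // toFun Q = P} ≤ d

/-- The field `K(f^{-n}(α))` generated over `K` by the `n`-th preimages of `α`. -/
def levelField {K : Type*} [Field K] [NumberField K] (X : CurveOverK K)
    (f : X.Pts → X.Pts) (α : X.Pts) (n : ℕ) : IntermediateField K (Kbar K) :=
  ⨆ β : preV f α n, X.fod (β : X.Pts)

end

/-!
Galois equivariance of `f` and rationality of `α` make `Gal(K̄/K)` act on the preimage tree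
through a homomorphism `ρ`, so that `G = ρ(Gal(K̄/K))` and `G' = ρ(Gal(K̄/K'))`. As `K'/K` is
finite, `Gal(K̄/K')` has finite index, hence `G ⊆ t·G'` for a finite set `t`. Left translations
are isometries, so `N_ε(G') ≤ N_ε(G) ≤ |t| N_ε(G')`; the logarithms of the covering numbers
differ by at most `log |t|`, which is negligible against `log (1/ε) → ∞`.
-/

open Filter Topology
open scoped Pointwise

section LiminfPerturbation

lemma sSup_le_sSup_of_forall_sub_mem {S T : Set ℝ}
    (hST : ∀ c ∈ S, ∀ ε > 0, c - ε ∈ T) (hTS : ∀ c ∈ T, ∀ ε > 0, c - ε ∈ S) :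
    sSup S ≤ sSup T := by
  rcases S.eq_empty_or_nonempty with rfl | hS
  · rcases T.eq_empty_or_nonempty with rfl | ⟨c, hc⟩
    · rfl
    · exact absurd (hTS c hc 1 one_pos) (Set.notMem_empty _)
  by_cases hT : BddAbove T
  · exact csSup_le hS fun c hc =>
      le_of_forall_sub_le fun ε hε => le_csSup hT (hST c hc ε hε)
  · have hS' : ¬ BddAbove S := fun ⟨M, hM⟩ =>
      hT ⟨M + 1, fun c hc => by linarith [hM (hTS c hc 1 one_pos)]⟩
    rw [Real.sSup_of_not_bddAbove hS', Real.sSup_of_not_bddAbove hT]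

variable {ι : Type*} {l : Filter ι}

theorem liminf_eq_liminf_of_tendsto_sub {u v : ι → ℝ} (h : Tendsto (u - v) l (𝓝 0)) :
    liminf u l = liminf v l := by
  have shift : ∀ {u v : ι → ℝ}, Tendsto (u - v) l (𝓝 0) → ∀ c ∈ {a | ∀ᶠ n in l, a ≤ u n},
      ∀ ε > 0, c - ε ∈ {a | ∀ᶠ n in l, a ≤ v n} := by
    intro u v h c hc ε hε
    filter_upwards [hc, h.eventually (gt_mem_nhds hε)] with n hcn hn
    simp only [Pi.sub_apply] at hn
    linarith
  have h' : Tendsto (v - u) l (𝓝 0) := by rw [← neg_sub, ← neg_zero]; exact h.neg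
  rw [liminf_eq, liminf_eq]
  exact le_antisymm (sSup_le_sSup_of_forall_sub_mem (shift h) (shift h'))
    (sSup_le_sSup_of_forall_sub_mem (shift h') (shift h))

theorem Real.limsup_eq_neg_liminf_neg (u : ι → ℝ) : limsup u l = -liminf (-u) l := by
  rw [limsup_eq, liminf_eq, Real.sInf_def]
  congr 2
  ext a
  simp only [Set.mem_neg, Set.mem_ofPred_eq, Pi.neg_apply, le_neg]

theorem limsup_eq_limsup_of_tendsto_sub {u v : ι → ℝ} (h : Tendsto (u - v) l (𝓝 0)) :
    limsup u l = limsup v l := by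
  rw [Real.limsup_eq_neg_liminf_neg, Real.limsup_eq_neg_liminf_neg,
    liminf_eq_liminf_of_tendsto_sub (by rw [neg_sub_neg, ← neg_sub, ← neg_zero]; exact h.neg)]

end LiminfPerturbation

section CoverNum

variable {V : ℕ → Type*} {d n : ℕ}

lemma treeDist_le_treeScale_of_agreeUpTo {σ τ : ∀ k, Equiv.Perm (V k)}
    (h : AgreeUpTo n σ τ) : treeDist d σ τ ≤ treeScale d n :=
  csInf_le ⟨0, by rintro x ⟨m, -, rfl⟩; unfold treeScale; positivity⟩ ⟨n, h, rfl⟩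

lemma treeDist_mul_left (g σ τ : ∀ k, Equiv.Perm (V k)) :
    treeDist d (g * σ) (g * τ) = treeDist d σ τ := by
  simp only [treeDist, AgreeUpTo, Pi.mul_apply, mul_right_inj]

variable [∀ k, Finite (V k)]

lemma exists_finset_card_eq_coverNum (d n : ℕ) (G : Set (∀ k, Equiv.Perm (V k))) :
    ∃ s : Finset (∀ k, Equiv.Perm (V k)), s.card = coverNum d G n ∧
      G ⊆ ⋃ σ ∈ s, {τ | treeDist d σ τ ≤ treeScale d n} := by
  refine Nat.sInf_mem (s := {m | ∃ s : Finset _, s.card = m ∧ _}) ?_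
  -- one representative of each restriction to the height-`n` subtree
  let r := fun (σ : ∀ k, Equiv.Perm (V k)) (k : Fin (n + 1)) => σ k.1
  have hfin : (r '' G).Finite := Set.toFinite _
  refine ⟨_, hfin.toFinset.image (Function.invFunOn r G), rfl, fun σ hσ => ?_⟩
  have hr : r (Function.invFunOn r G (r σ)) = r σ := Function.invFunOn_eq ⟨σ, hσ, rfl⟩
  refine Set.mem_biUnion (Finset.mem_image_of_mem _ (hfin.mem_toFinset.2 ⟨σ, hσ, rfl⟩)) ?_
  exact treeDist_le_treeScale_of_agreeUpTo fun k hk => congrFun hr ⟨k, Nat.lt_succ_of_le hk⟩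

lemma coverNum_mono {H G : Set (∀ k, Equiv.Perm (V k))} (hHG : H ⊆ G) :
    coverNum d H n ≤ coverNum d G n := by
  obtain ⟨s, hs, hG⟩ := exists_finset_card_eq_coverNum d n G
  exact Nat.sInf_le ⟨s, hs, hHG.trans hG⟩

lemma coverNum_pos {G : Set (∀ k, Equiv.Perm (V k))} (hG : G.Nonempty) :
    0 < coverNum d G n := by
  obtain ⟨s, hs, hcov⟩ := exists_finset_card_eq_coverNum d n G
  obtain ⟨σ, hσ, -⟩ := Set.mem_iUnion₂.mp (hcov hG.some_mem)
  exact hs ▸ Finset.card_pos.mpr ⟨σ, hσ⟩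

lemma coverNum_le_card_mul {H G : Set (∀ k, Equiv.Perm (V k))}
    (t : Finset (∀ k, Equiv.Perm (V k))) (hG : G ⊆ (t : Set _) * H) :
    coverNum d G n ≤ t.card * coverNum d H n := by
  obtain ⟨s, hs, hH⟩ := exists_finset_card_eq_coverNum d n H
  have hcov : G ⊆ ⋃ σ ∈ t * s, {τ | treeDist d σ τ ≤ treeScale d n} := by
    rintro _ hx
    obtain ⟨g, hg, y, hy, rfl⟩ := hG hx
    obtain ⟨σ, hσ, hyσ⟩ := Set.mem_iUnion₂.mp (hH hy)
    refine Set.mem_biUnion (Finset.mul_mem_mul hg hσ) ?_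
    rwa [Set.mem_ofPred_eq, treeDist_mul_left]
  calc coverNum d G n ≤ (t * s).card := Nat.sInf_le ⟨_, rfl, hcov⟩
    _ ≤ t.card * s.card := Finset.card_mul_le
    _ = t.card * coverNum d H n := by rw [hs]

end CoverNum

section Dimension

variable {V : ℕ → Type*} {d : ℕ}

lemma le_scaleExp (hd : 1 ≤ d) (n : ℕ) : n ≤ scaleExp d n := by
  simpa [scaleExp] using Finset.sum_le_sum fun i (_ : i ∈ Finset.range n) => Nat.one_le_pow i d hd

lemma log_inv_treeScale (d n : ℕ) :
    Real.log (1 / treeScale d n) = scaleExp d n * Real.log d.factorial := by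
  rw [one_div, treeScale, inv_inv, Real.log_pow]

lemma tendsto_log_inv_treeScale (hd : 2 ≤ d) :
    Tendsto (fun n => Real.log (1 / treeScale d n)) atTop atTop := by
  simp_rw [log_inv_treeScale]
  have hlog : 0 < Real.log d.factorial :=
    Real.log_pos (by exact_mod_cast Nat.one_lt_factorial.mpr hd)
  exact (tendsto_natCast_atTop_atTop.comp
    (tendsto_atTop_mono (le_scaleExp (by omega)) tendsto_id)).atTop_mul_const hlog

variable [∀ k, Finite (V k)]

lemma abs_log_coverNum_sub_le {H G : Set (∀ k, Equiv.Perm (V k))} (hHG : H ⊆ G)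
    (hH : H.Nonempty) (t : Finset (∀ k, Equiv.Perm (V k))) (hG : G ⊆ (t : Set _) * H)
    (n : ℕ) :
    |Real.log (coverNum d H n) - Real.log (coverNum d G n)| ≤ Real.log t.card := by
  have hHpos : (0 : ℝ) < coverNum d H n := by exact_mod_cast coverNum_pos hH
  have hmono : (coverNum d H n : ℝ) ≤ coverNum d G n := by exact_mod_cast coverNum_mono hHG
  have hmul : (coverNum d G n : ℝ) ≤ t.card * coverNum d H n := by
    exact_mod_cast coverNum_le_card_mul t hG
  have htpos : (0 : ℝ) < t.card := pos_of_mul_pos_left (hHpos.trans_le (hmono.trans hmul))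
    hHpos.le
  rw [abs_sub_comm, abs_of_nonneg (sub_nonneg.mpr (Real.log_le_log hHpos hmono)),
    sub_le_iff_le_add, ← Real.log_mul htpos.ne' hHpos.ne']
  exact Real.log_le_log (hHpos.trans_le hmono) hmul

theorem dimLower_eq_and_dimUpper_eq_of_subset_finset_mul (hd : 2 ≤ d)
    {H G : Set (∀ k, Equiv.Perm (V k))} (hHG : H ⊆ G) (hH : H.Nonempty)
    (t : Finset (∀ k, Equiv.Perm (V k))) (hG : G ⊆ (t : Set _) * H) :
    dimLower d H = dimLower d G ∧ dimUpper d H = dimUpper d G := by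
  have hL := tendsto_log_inv_treeScale hd
  have h : Tendsto ((fun n => Real.log (coverNum d H n) / Real.log (1 / treeScale d n)) -
      fun n => Real.log (coverNum d G n) / Real.log (1 / treeScale d n)) atTop (𝓝 0) := by
    refine squeeze_zero_norm' ?_ ((tendsto_const_nhds (x := Real.log t.card)).div_atTop hL)
    filter_upwards [hL.eventually_gt_atTop 0] with n hn
    rw [Pi.sub_apply, ← sub_div, norm_div, Real.norm_eq_abs, Real.norm_of_nonneg hn.le]
    exact div_le_div_of_nonneg_right (abs_log_coverNum_sub_le hHG hH t hG n) hn.le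
  exact ⟨liminf_eq_liminf_of_tendsto_sub h, limsup_eq_limsup_of_tendsto_sub h⟩

theorem dimLower_eq_and_dimUpper_eq_image_of_finiteIndex {Γ : Type*} [Group Γ] (hd : 2 ≤ d)
    (ρ : Γ →* ∀ k, Equiv.Perm (V k)) (H : Subgroup Γ) [H.FiniteIndex] :
    dimLower d (ρ '' H) = dimLower d (ρ '' (⊤ : Subgroup Γ)) ∧
      dimUpper d (ρ '' H) = dimUpper d (ρ '' (⊤ : Subgroup Γ)) := by
  obtain ⟨S, hS, -⟩ := H.exists_isComplement_left 1
  have hSH : ρ '' (⊤ : Subgroup Γ) = ρ '' S * ρ '' H := by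
    rw [Subgroup.coe_top, ← hS.mul_eq, Set.image_mul]
  refine dimLower_eq_and_dimUpper_eq_of_subset_finset_mul hd
    (Set.image_mono (Set.subset_univ _)) ⟨ρ 1, 1, H.one_mem, rfl⟩
    (hS.finite_left.image ρ).toFinset ?_
  rw [Set.Finite.coe_toFinset, hSH]

end Dimension

section PreimageTree

variable {Pts : Type*} {φ : Pts → Pts} {α : Pts}

lemma finite_preV (hφ : ∀ P, Finite {Q // φ Q = P}) : ∀ n, Finite (preV φ α n)
  | 0 => Finite.of_subsingleton (α := {β // β = α})
  | n + 1 =>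
    have := finite_preV hφ n
    Finite.of_injective (β := Σ γ : preV φ α n, {Q // φ Q = γ})
      (fun β => ⟨preParent φ α n β, β.1, rfl⟩)
      fun _ _ h => Subtype.ext (congrArg (fun x => (x.2 : Pts)) h)

variable {Γ : Type*} [Group Γ] (act : Γ →* Equiv.Perm Pts)

lemma iterate_act_eq_iff (hφ : ∀ g, Function.Commute φ (act g)) (hα : ∀ g, act g α = α)
    (g : Γ) (n : ℕ) (β : Pts) : φ^[n] (act g β) = α ↔ φ^[n] β = α := by
  rw [(hφ g).iterate_left n β]
  conv_lhs => rw [← hα g]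
  exact (act g).injective.eq_iff

def preimageTreeRep (hφ : ∀ g, Function.Commute φ (act g)) (hα : ∀ g, act g α = α) :
    Γ →* ∀ n, Equiv.Perm (preV φ α n) where
  toFun g n := (act g).subtypePerm (iterate_act_eq_iff act hφ hα g n)
  map_one' := by ext; simp
  map_mul' _ _ := by ext; simp; rfl

lemma arbGal_eq_image_fixingSubgroup {K : Type*} [Field K]
    (act : (Kbar K ≃ₐ[K] Kbar K) →* Equiv.Perm Pts) (hφ : ∀ g, Function.Commute φ (act g))
    (hα : ∀ g, act g α = α) (L : IntermediateField K (Kbar K)) :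
    arbGal (fun σ => ⇑(act σ)) L φ α = preimageTreeRep act hφ hα '' L.fixingSubgroup := by
  ext g
  refine exists_congr fun σ => and_congr (L.mem_fixingSubgroup_iff σ).symm ⟨fun h => ?_, ?_⟩
  · ext n β
    exact (h n β).symm
  · rintro rfl n β
    rfl

end PreimageTree

lemma IntermediateField.finiteIndex_fixingSubgroup {F E : Type*} [Field F] [Field E]
    [Algebra F E] [IsGalois F E] (L : IntermediateField F E) [FiniteDimensional F L] :
    L.fixingSubgroup.FiniteIndex :=
  ⟨by rw [← L.finrank_eq_fixingSubgroup_index]; exact Module.finrank_pos.ne'⟩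

theorem arboreal_base_extension_invariance_general {K : Type*} [Field K] [NumberField K] {d : ℕ}
    (hd : 2 ≤ d) (X : CurveOverK K)
    (f : CurveMor X d) (α : X.Pts) (hα : X.fod α = ⊥)
    (K' : IntermediateField K (Kbar K)) (hK' : FiniteDimensional K K') :
    dimLower d (arbGal (K := K) (fun σ => ⇑(X.act σ)) K' f.toFun α) =
        dimLower d (arbGal (K := K) (fun σ => ⇑(X.act σ)) ⊥ f.toFun α) ∧
      dimUpper d (arbGal (K := K) (fun σ => ⇑(X.act σ)) K' f.toFun α) =
        dimUpper d (arbGal (K := K) (fun σ => ⇑(X.act σ)) ⊥ f.toFun α) := by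
  have hf : ∀ σ, Function.Commute f.toFun (X.act σ) := f.equivariant
  have hα_fixed : ∀ σ, X.act σ α = α := fun σ => (X.fod_spec σ α).mpr fun x hx => by
    obtain ⟨k, rfl⟩ := IntermediateField.mem_bot.mp (hα ▸ hx)
    exact σ.commutes k
  have := finite_preV (α := α) fun P => (Nat.card_pos_iff.mp (f.fiber_lb P)).2
  have := K'.finiteIndex_fixingSubgroup
  rw [arbGal_eq_image_fixingSubgroup _ hf hα_fixed, arbGal_eq_image_fixingSubgroup _ hf hα_fixed,
    IntermediateField.fixingSubgroup_bot]
  exact dimLower_eq_and_dimUpper_eq_image_of_finiteIndex hd _ K'.fixingSubgroup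

theorem arboreal_base_extension_invariance {K : Type*} [Field K] [NumberField K] {d : ℕ}
    (hd : 2 ≤ d) (X : CurveOverK K) (hgenus : X.genus = 0 ∨ X.genus = 1)
    (f : CurveMor X d) (α : X.Pts) (hα : X.fod α = ⊥)
    (K' : IntermediateField K (Kbar K)) (hK' : FiniteDimensional K K') :
    dimLower d (arbGal (K := K) (fun σ => ⇑(X.act σ)) K' f.toFun α) =
        dimLower d (arbGal (K := K) (fun σ => ⇑(X.act σ)) ⊥ f.toFun α) ∧
      dimUpper d (arbGal (K := K) (fun σ => ⇑(X.act σ)) K' f.toFun α) =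
        dimUpper d (arbGal (K := K) (fun σ => ⇑(X.act σ)) ⊥ f.toFun α) :=
  arboreal_base_extension_invariance_general hd X f α hα K' hK'
end

section
/- Let K be a number field, let f : P^1 → P^1 be a rational map of degree d ≥ 2 defined over K, and let α ∈ P^1(K). Assume that f^{−1}(α) ⊆ P^1(K). Then dim_upper(G_{f,α}) ≤ (1/d)·Σ_{β ∈ f^{−1}(α)} dim_upper(G_{f,β}), the sum running over the distinct points β of f^{−1}(α). -/
open scoped Classical

noncomputable section

/-- The projective line `ℙ¹(L) = L ∪ {∞}`, with `none` the point at infinity. -/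
abbrev P1 (L : Type*) := Option L

/-- The action on `ℙ¹(A)` of the rational map `f = p/q` with coefficients in `K`,
for an extension field `A` of `K`.  At a finite point `x` the value is `p(x)/q(x)`
(`∞` when `q(x) = 0`), and the value at `∞` is governed by the degrees of `p` and
`q` and their leading coefficients. -/
def ratAct {K : Type*} [Field K] (p q : Polynomial K)
    (A : Type*) [Field A] [Algebra K A] : P1 A → P1 A
  | some x =>
      if Polynomial.aeval x q = 0 then none
      else some (Polynomial.aeval x p / Polynomial.aeval x q)
  | none =>
      if q.natDegree < p.natDegree then none
      else if p.natDegree < q.natDegree then some 0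
      else some (algebraMap K A (p.leadingCoeff / q.leadingCoeff))

/-- The natural action of `Gal(K̄/K)` on `ℙ¹(K̄)`. -/
def galP1 {K : Type*} [Field K] (σ : Kbar K ≃ₐ[K] Kbar K) : P1 (Kbar K) → P1 (Kbar K) :=
  Option.map σ

/-- The inclusion `ℙ¹(K) ⊆ ℙ¹(K̄)`. -/
def P1K {K : Type*} [Field K] : P1 K → P1 (Kbar K) :=
  Option.map (algebraMap K (Kbar K))

/-- The set of `L`-rational points of `ℙ¹(K̄)`, for an intermediate field `L` of
`K̄/K`. -/
def P1Rat {K : Type*} [Field K] (L : IntermediateField K (Kbar K)) : Set (P1 (Kbar K)) :=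
  {β | β = none ∨ ∃ x ∈ L, β = some x}

/-- The Möbius transformation of `ℙ¹(F)` attached to `(a b; c e) ∈ PGL₂(F)`. -/
def moebius {F : Type*} [Field F] (a b c e : F) : P1 F → P1 F
  | some x => if c * x + e = 0 then none else some ((a * x + b) / (c * x + e))
  | none => if c = 0 then none else some (a / c)

/-- The normalizing constant `C_D = log(D!)/(D-1)`. -/
def Cconst (D : ℕ) : ℝ := Real.log (D.factorial : ℝ) / ((D : ℝ) - 1)

/-- The ramification multiplicity at a point `γ ∈ ℙ¹(A)` of the degree-`d` rational
map `f = p/q` with coefficients in `K ⊆ A`:  at a finite point `γ` with `f(γ) = c`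
finite it is the order of vanishing of `p - c·q` at `γ`; the cases involving `∞` are
handled using `q` and degrees.  A point is critical when this is at least `2`. -/
def multAt {K : Type*} [Field K] (p q : Polynomial K)
    (A : Type*) [Field A] [Algebra K A] (d : ℕ) : P1 A → ℕ
  | some x =>
      match ratAct p q A (some x) with
      | some c => ((p.map (algebraMap K A)) -
          Polynomial.C c * (q.map (algebraMap K A))).rootMultiplicity x
      | none => (q.map (algebraMap K A)).rootMultiplicity x
  | none =>
      match ratAct p q A none with
      | some c => d - ((p.map (algebraMap K A)) -
          Polynomial.C c * (q.map (algebraMap K A))).natDegree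
      | none => d - q.natDegree

/-! The covering number of a group of tree automorphisms at the scale `ε_n` is the number
`|r_n(G)|` of its restrictions to the height-`n` subtree, and
`log (1/ε_n) = (1 + d + ⋯ + d^(n-1)) log d!`. As every `β ∈ f⁻¹(α)` is `K`-rational, every
Galois element fixes it, and its action on the first `n + 1` levels of the tree of `α` is
determined by its actions on the first `n` levels of the trees of the `β`; hence
`|r_{n+1}(G_{f,α})| ≤ ∏_β |r_n(G_{f,β})|`. Since `log (1/ε_{n+1}) ≥ d log (1/ε_n)`, taking
logarithms gives the inequality before the `limsup`. The `limsup`s are finite because a rational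
map of degree `d` has at most `d` preimages of each point, which bounds `|r_n(G)|` by
`d ^ (d (1 + d + ⋯ + d^(n-1)))`. -/

section TreeMetric

variable {V : ℕ → Type*} {d : ℕ}

lemma scaleExp_succ (d n : ℕ) : scaleExp d (n + 1) = scaleExp d n + d ^ n :=
  Finset.sum_range_succ _ _

lemma scaleExp_succ' (d n : ℕ) : scaleExp d (n + 1) = d * scaleExp d n + 1 := by
  rw [scaleExp, Finset.sum_range_succ', scaleExp, Finset.mul_sum]
  simp [pow_succ']

lemma scaleExp_pos {n : ℕ} (hn : 0 < n) : 0 < scaleExp d n := by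
  obtain ⟨m, rfl⟩ := Nat.exists_eq_add_one.mpr hn
  rw [scaleExp_succ']
  omega

lemma treeScale_strictAnti (hd : 2 ≤ d) : StrictAnti (treeScale d) := by
  refine strictAnti_nat_of_succ_lt fun n => inv_strictAnti₀ (by positivity) ?_
  refine pow_lt_pow_right₀ (by exact_mod_cast Nat.lt_of_lt_of_le hd (Nat.self_le_factorial d)) ?_
  rw [scaleExp_succ]
  exact Nat.lt_add_of_pos_right (Nat.pow_pos (by omega))

lemma agreeUpTo_zero [Subsingleton (V 0)] (σ τ : ∀ k, Equiv.Perm (V k)) : AgreeUpTo 0 σ τ :=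
  fun k hk => by
    obtain rfl : k = 0 := Nat.le_zero.mp hk
    exact Subsingleton.elim _ _

lemma treeDist_le_treeScale_iff (hd : 2 ≤ d) [Subsingleton (V 0)] {σ τ : ∀ k, Equiv.Perm (V k)}
    {n : ℕ} : treeDist d σ τ ≤ treeScale d n ↔ AgreeUpTo n σ τ := by
  have hanti := treeScale_strictAnti hd
  refine ⟨fun h => ?_, fun h => csInf_le ⟨0, ?_⟩ ⟨n, h, rfl⟩⟩
  · by_contra hn
    obtain ⟨m, rfl⟩ : ∃ m, n = m + 1 :=
      Nat.exists_eq_add_one.mpr (Nat.pos_of_ne_zero fun h0 => hn (h0 ▸ agreeUpTo_zero σ τ))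
    have hlow : treeScale d m ≤ treeDist d σ τ := by
      refine le_csInf ⟨_, 0, agreeUpTo_zero σ τ, rfl⟩ ?_
      rintro x ⟨k, hk, rfl⟩
      refine hanti.antitone (Nat.le_of_lt_succ (lt_of_not_ge fun hge => hn ?_))
      exact fun j hj => hk j (hj.trans hge)
    linarith [hanti (Nat.lt_succ_self m)]
  · rintro x ⟨k, -, rfl⟩
    exact (inv_pos.mpr (by positivity)).le

lemma agreeUpTo_iff_restrict_eq {σ τ : ∀ k, Equiv.Perm (V k)} {n : ℕ} :
    AgreeUpTo n σ τ ↔ (fun k : Fin (n + 1) => σ k.1) = (fun k : Fin (n + 1) => τ k.1) :=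
  ⟨fun h => funext fun k => h k (Nat.le_of_lt_succ k.2),
    fun h k hk => congrFun h ⟨k, Nat.lt_succ_of_le hk⟩⟩

lemma subset_iUnion_treeBall_iff (hd : 2 ≤ d) [Subsingleton (V 0)]
    {G : Set (∀ k, Equiv.Perm (V k))} {s : Set (∀ k, Equiv.Perm (V k))} {n : ℕ} :
    G ⊆ ⋃ σ ∈ s, {τ | treeDist d σ τ ≤ treeScale d n} ↔
      (fun σ (k : Fin (n + 1)) => σ k.1) '' G ⊆ (fun σ (k : Fin (n + 1)) => σ k.1) '' s := by
  rw [Set.image_subset_iff]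
  simp only [Set.subset_def, Set.mem_iUnion₂, Set.mem_ofPred_eq, Set.mem_preimage, Set.mem_image,
    treeDist_le_treeScale_iff hd, agreeUpTo_iff_restrict_eq, exists_prop]

lemma coverNum_eq_levelCard (hd : 2 ≤ d) [Subsingleton (V 0)] (G : Set (∀ k, Equiv.Perm (V k)))
    (n : ℕ) : coverNum d G n = levelCard G n := by
  set R := fun (σ : ∀ k, Equiv.Perm (V k)) (k : Fin (n + 1)) => σ k.1
  have hcover : ∀ s : Finset (∀ k, Equiv.Perm (V k)),
      G ⊆ ⋃ σ ∈ s, {τ | treeDist d σ τ ≤ treeScale d n} ↔ R '' G ⊆ R '' s :=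
    fun s => subset_iUnion_treeBall_iff hd
  rw [levelCard, Nat.card_coe_set_eq, coverNum]
  by_cases hfin : (R '' G).Finite
  · obtain ⟨t, htG, hbij⟩ := Set.exists_subset_bijOn G R
    have ht : t.Finite := Set.Finite.of_finite_image (hbij.image_eq ▸ hfin) hbij.injOn
    have hcard : ht.toFinset.card = (R '' G).ncard := by
      rw [← Set.ncard_eq_toFinset_card t ht, ← hbij.image_eq, hbij.injOn.ncard_image]
    have hcov : G ⊆ ⋃ σ ∈ ht.toFinset, {τ | treeDist d σ τ ≤ treeScale d n} := by
      rw [hcover, Set.Finite.coe_toFinset, hbij.image_eq]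
    refine le_antisymm (Nat.sInf_le ⟨_, hcard, hcov⟩) (le_csInf ⟨_, _, rfl, hcov⟩ ?_)
    rintro m ⟨s, rfl, hs⟩
    rw [hcover] at hs
    exact (Set.ncard_le_ncard hs (s.finite_toSet.image R)).trans
      ((Set.ncard_image_le s.finite_toSet).trans (Set.ncard_coe_finset s).le)
  · -- both sides are the junk value `0`: no finite cover exists, and `sInf ∅ = 0`
    rw [Set.Infinite.ncard hfin, Nat.sInf_eq_zero]
    refine Or.inr (Set.eq_empty_of_forall_notMem ?_)
    rintro m ⟨s, -, hs⟩
    exact hfin ((s.finite_toSet.image R).subset ((hcover s).mp hs))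

end TreeMetric

lemma Nat.card_le_card_mul_of_card_fiber_le {X Y : Type*} [Finite Y] (f : X → Y) {m : ℕ}
    [∀ y, Finite {x // f x = y}] (h : ∀ y, Nat.card {x // f x = y} ≤ m) :
    Nat.card X ≤ Nat.card Y * m := by
  have := Fintype.ofFinite Y
  rw [← Nat.card_congr (Equiv.sigmaFiberEquiv f), Nat.card_sigma, Nat.card_eq_fintype_card,
    ← smul_eq_mul, ← Finset.card_univ, ← Finset.sum_const]
  exact Finset.sum_le_sum fun y _ => h y

lemma Nat.card_range_le_of_factors_through {X A B : Type*} [Finite B] {f : X → A} {g : X → B}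
    (h : ∀ x y, g x = g y → f x = f y) : Nat.card (Set.range f) ≤ Nat.card B := by
  choose x hx using fun a : Set.range f => a.2
  refine Nat.card_le_card_of_injective (fun a => g (x a)) fun a b hab => Subtype.ext ?_
  rw [← hx a, ← hx b]
  exact h _ _ hab

section PreimageTree

variable {X : Type*} {φ : X → X} {a : X} {d : ℕ}

def CommutesWithParent (φ : X → X) (a : X) (g : ∀ k, Equiv.Perm (preV φ a k)) : Prop :=
  ∀ k (γ : preV φ a (k + 1)), preParent φ a k (g (k + 1) γ) = g k (preParent φ a k γ)

instance preV_zero_subsingleton : Subsingleton (preV φ a 0) :=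
  ⟨fun x y => Subtype.ext (x.2.trans y.2.symm)⟩

variable (hφ : ∀ t, (φ ⁻¹' {t}).encard ≤ d)
include hφ

lemma finite_preParent_fiber {n : ℕ} (v : preV φ a n) :
    Finite {γ // preParent φ a n γ = v} ∧ Nat.card {γ // preParent φ a n γ = v} ≤ d := by
  obtain ⟨hfin, hcard⟩ := Set.encard_le_coe_iff_finite_ncard_le.mp (hφ v.1)
  have := hfin.to_subtype
  let e : {γ // preParent φ a n γ = v} → φ ⁻¹' {v.1} :=
    fun γ => ⟨γ.1.1, congrArg Subtype.val γ.2⟩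
  have he : e.Injective := fun γ γ' h =>
    Subtype.ext (Subtype.ext (congrArg Subtype.val h :))
  exact ⟨Finite.of_injective e he, (Nat.card_le_card_of_injective e he).trans hcard⟩

lemma finite_preV_s11 (n : ℕ) : Finite (preV φ a n) := by
  induction n with
  | zero => infer_instance
  | succ n ih =>
    have := fun v => (finite_preParent_fiber hφ (a := a) (n := n) v).1
    exact Finite.of_equiv _ (Equiv.sigmaFiberEquiv (preParent φ a n))

lemma card_preV_le (n : ℕ) : Nat.card (preV φ a n) ≤ d ^ n := by
  induction n with
  | zero => simp
  | succ n ih =>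
    have := finite_preV_s11 hφ (a := a) n
    have := fun v => (finite_preParent_fiber hφ (a := a) (n := n) v).1
    calc Nat.card (preV φ a (n + 1)) ≤ Nat.card (preV φ a n) * d :=
          Nat.card_le_card_mul_of_card_fiber_le _ fun v => (finite_preParent_fiber hφ v).2
      _ ≤ d ^ (n + 1) := by rw [pow_succ]; exact Nat.mul_le_mul_right d ih

lemma levelCard_succ_le {G : Set (∀ k, Equiv.Perm (preV φ a k))}
    (hG : ∀ g ∈ G, CommutesWithParent φ a g) (n : ℕ) :
    levelCard G (n + 1) ≤ levelCard G n * d ^ Nat.card (preV φ a (n + 1)) := by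
  have := finite_preV_s11 hφ (a := a)
  have := Fintype.ofFinite (preV φ a (n + 1))
  set I := fun m => (fun (σ : ∀ k, Equiv.Perm (preV φ a k)) (k : Fin (m + 1)) => σ k.1) '' G
  have htrunc : ∀ t ∈ I (n + 1), (fun k : Fin (n + 1) => t k.castSucc) ∈ I n := by
    rintro _ ⟨g, hg, rfl⟩
    exact ⟨g, hg, rfl⟩
  let trunc : I (n + 1) → I n := fun t => ⟨_, htrunc t.1 t.2⟩
  -- over a fixed truncation, the top level sends each vertex among the children of a fixed vertex
  have hchild : ∀ s (t : {t // trunc t = s}) (γ : preV φ a (n + 1)),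
      preParent φ a n (t.1.1 (Fin.last (n + 1)) γ) = s.1 (Fin.last n) (preParent φ a n γ) := by
    rintro s ⟨⟨_, g, hg, rfl⟩, rfl⟩ γ
    exact hG g hg n γ
  let top : ∀ s, {t // trunc t = s} →
      ∀ γ : preV φ a (n + 1), {δ // preParent φ a n δ = s.1 (Fin.last n) (preParent φ a n γ)} :=
    fun s t γ => ⟨_, hchild s t γ⟩
  have htop : ∀ s, (top s).Injective := fun s t t' h => by
    refine Subtype.ext (Subtype.ext (funext fun k => Fin.lastCases ?_ (fun j => ?_) k))
    · exact Equiv.ext fun γ => congrArg Subtype.val (congrFun h γ)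
    · exact congrFun (congrArg Subtype.val (t.2.trans t'.2.symm)) j
  refine Nat.card_le_card_mul_of_card_fiber_le trunc fun s => ?_
  have := fun γ => (finite_preParent_fiber hφ (s.1 (Fin.last n) (preParent φ a n γ))).1
  calc Nat.card {t // trunc t = s}
      ≤ ∏ γ, Nat.card {δ // preParent φ a n δ = s.1 (Fin.last n) (preParent φ a n γ)} :=
        (Nat.card_le_card_of_injective _ (htop s)).trans_eq Nat.card_pi
    _ ≤ ∏ _γ : preV φ a (n + 1), d :=
        Finset.prod_le_prod' fun γ _ => (finite_preParent_fiber hφ _).2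
    _ = d ^ Nat.card (preV φ a (n + 1)) := by
        rw [Finset.prod_const, Finset.card_univ, Nat.card_eq_fintype_card]

lemma levelCard_le_pow {G : Set (∀ k, Equiv.Perm (preV φ a k))}
    (hG : ∀ g ∈ G, CommutesWithParent φ a g) (n : ℕ) :
    levelCard G n ≤ d ^ (d * scaleExp d n) := by
  induction n with
  | zero =>
    have (k : Fin 1) : Subsingleton (preV φ a k) := by
      rw [Fin.fin_one_eq_zero k]
      exact preV_zero_subsingleton
    rw [levelCard, Nat.card_coe_set_eq]
    exact (Set.ncard_le_one_of_subsingleton _).trans (by simp [scaleExp])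
  | succ n ih =>
    have htop : d ^ Nat.card (preV φ a (n + 1)) ≤ d ^ d ^ (n + 1) := by
      rcases d.eq_zero_or_pos with rfl | hd
      · simp [Nat.le_zero.mp ((card_preV_le hφ (n + 1)).trans_eq (zero_pow n.succ_ne_zero))]
      · exact Nat.pow_le_pow_right hd (card_preV_le hφ (n + 1))
    calc levelCard G (n + 1) ≤ d ^ (d * scaleExp d n) * d ^ d ^ (n + 1) :=
          (levelCard_succ_le hφ hG n).trans (Nat.mul_le_mul ih htop)
      _ = d ^ (d * scaleExp d (n + 1)) := by
          rw [← pow_add, scaleExp_succ, pow_succ' d n, mul_add]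

lemma levelCard_pos {G : Set (∀ k, Equiv.Perm (preV φ a k))} (hG : G.Nonempty) (n : ℕ) :
    0 < levelCard G n := by
  have := finite_preV_s11 hφ (a := a)
  have : Nonempty ((fun (σ : ∀ k, Equiv.Perm (preV φ a k)) (k : Fin (n + 1)) => σ k.1) '' G) :=
    (hG.image _).to_subtype
  exact Nat.card_pos

end PreimageTree

section Galois

variable {K : Type*} [Field K] {φ : P1 (Kbar K) → P1 (Kbar K)} {L : IntermediateField K (Kbar K)}

lemma galP1_eq_self_of_mem_P1Rat {σ : Kbar K ≃ₐ[K] Kbar K} (hσ : ∀ x ∈ L, σ x = x)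
    {β : P1 (Kbar K)} (hβ : β ∈ P1Rat L) : galP1 σ β = β := by
  rcases hβ with rfl | ⟨x, hx, rfl⟩
  · rfl
  · exact congrArg some (hσ x hx)

lemma arbGal_nonempty (a : P1 (Kbar K)) : (arbGal galP1 L φ a).Nonempty :=
  ⟨1, AlgEquiv.refl, fun _ _ => rfl, fun _ _ => Option.map_id_apply.symm⟩

variable (hφ : ∀ σ, Function.Commute φ (galP1 σ))
include hφ

lemma commutesWithParent_of_mem_arbGal {a : P1 (Kbar K)} {g : ∀ k, Equiv.Perm (preV φ a k)}
    (hg : g ∈ arbGal galP1 L φ a) : CommutesWithParent φ a g := by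
  obtain ⟨σ, -, hσ⟩ := hg
  intro k γ
  apply Subtype.ext
  change φ (g (k + 1) γ : P1 (Kbar K)) = (g k (preParent φ a k γ) : P1 (Kbar K))
  rw [hσ, hσ]
  exact hφ σ γ.1

def galPerm (σ : Kbar K ≃ₐ[K] Kbar K) {a : P1 (Kbar K)} (ha : galP1 σ a = a) (k : ℕ) :
    Equiv.Perm (preV φ a k) :=
  Equiv.Perm.subtypePerm (Equiv.optionCongr σ.toEquiv) fun x => by
    change φ^[k] (galP1 σ x) = a ↔ φ^[k] x = a
    conv_lhs => rw [((hφ σ).iterate_left k).eq, ← ha]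
    exact (Option.map_injective σ.injective).eq_iff

lemma galPerm_mem_arbGal {σ : Kbar K ≃ₐ[K] Kbar K} (hσ : ∀ x ∈ L, σ x = x) {a : P1 (Kbar K)}
    (ha : galP1 σ a = a) : galPerm hφ σ ha ∈ arbGal galP1 L φ a :=
  ⟨σ, hσ, fun _ _ => rfl⟩

lemma levelCard_arbGal_succ_le_prod [∀ β k, Finite (preV φ β k)] {a : P1 (Kbar K)}
    {s : Finset (P1 (Kbar K))} (hs : ∀ β, φ β = a → β ∈ s) (hrat : ∀ β ∈ s, β ∈ P1Rat L)
    (n : ℕ) :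
    levelCard (arbGal galP1 L φ a) (n + 1) ≤ ∏ β ∈ s, levelCard (arbGal galP1 L φ β) n := by
  set G := arbGal galP1 L φ a
  set R := fun (g : ∀ k, Equiv.Perm (preV φ a k)) (k : Fin (n + 2)) => g k.1
  set I := fun β : P1 (Kbar K) =>
    (fun (g : ∀ k, Equiv.Perm (preV φ β k)) (k : Fin (n + 1)) => g k.1) '' arbGal galP1 L φ β
  choose σ hσL hσ using fun g : G => g.2
  have hfix : ∀ g β, β ∈ s → galP1 (σ g) β = β :=
    fun g β hβ => galP1_eq_self_of_mem_P1Rat (hσL g) (hrat β hβ)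
  let Ψ : G → ∀ β : s, I β := fun g β =>
    ⟨_, galPerm hφ (σ g) (hfix g β β.2), galPerm_mem_arbGal hφ (hσL g) _, rfl⟩
  -- a vertex at level `j + 1` of the tree of `a` is a vertex at level `j` of the tree of
  -- `β = φ^[j] γ`, and `β ∈ s` since `φ β = a`
  have hdet : ∀ g h, Ψ g = Ψ h → R g = R h := fun g h hgh => by
    refine funext fun k => Fin.cases ?_ (fun j => ?_) k
    · exact Equiv.ext fun _ => @Subsingleton.elim _ preV_zero_subsingleton _ _
    refine Equiv.ext fun γ => Subtype.ext ?_
    have hβ : φ^[j] γ.1 ∈ s := hs _ ((Function.iterate_succ_apply' φ j γ.1).symm.trans γ.2)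
    have := congrArg (fun t => ((t ⟨_, hβ⟩).1 j ⟨γ.1, rfl⟩).1) hgh
    change galP1 (σ g) γ.1 = galP1 (σ h) γ.1 at this
    rw [hσ, hσ, this]
  calc levelCard G (n + 1) = Nat.card (Set.range fun g : G => R g) := by
        rw [levelCard, Set.image_eq_range]
    _ ≤ Nat.card (∀ β : s, I β) := Nat.card_range_le_of_factors_through hdet
    _ = ∏ β ∈ s, levelCard (arbGal galP1 L φ β) n := by
        rw [Nat.card_pi, Finset.prod_coe_sort s fun β => Nat.card (I β)]
        rfl

end Galois

section RationalMap

open Polynomial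

variable {K : Type*} [Field K] {A : Type*} [Field A] [Algebra K A]

lemma ratAct_map {B : Type*} [Field B] [Algebra K B] (p q : K[X]) (σ : A →ₐ[K] B) (x : P1 A) :
    ratAct p q B (Option.map σ x) = Option.map σ (ratAct p q A x) := by
  cases x with
  | none => unfold ratAct; split_ifs <;> simp [AlgHom.commutes]
  | some y =>
    by_cases hy : aeval y q = 0 <;>
      simp [ratAct, aeval_algHom_apply, hy, map_div₀]

lemma commute_ratAct_galP1 (p q : K[X]) (σ : Kbar K ≃ₐ[K] Kbar K) :
    Function.Commute (ratAct p q (Kbar K)) (galP1 σ) :=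
  ratAct_map p q (σ : Kbar K →ₐ[K] Kbar K)

def ratFiberPoly (p q : K[X]) (A : Type*) [Field A] [Algebra K A] : P1 A → A[X]
  | none => q.map (algebraMap K A)
  | some c => p.map (algebraMap K A) - C c * q.map (algebraMap K A)

variable {p q : K[X]} {d : ℕ}

lemma ratFiberPoly_ne_zero (hd : 0 < d) (hf : IsCoprime p q)
    (hdeg : max p.natDegree q.natDegree = d) (t : P1 A) : ratFiberPoly p q A t ≠ 0 := by
  cases t with
  | none =>
    intro h
    obtain rfl : q = 0 := (Polynomial.map_eq_zero _).mp h
    have := natDegree_eq_zero_of_isUnit (isCoprime_zero_right.mp hf)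
    simp_all
  | some c =>
    intro h
    have hdvd : q.map (algebraMap K A) ∣ p.map (algebraMap K A) :=
      ⟨C c, by rw [sub_eq_zero.mp h, mul_comm]⟩
    have hq := natDegree_eq_zero_of_isUnit
      ((hf.map (mapRingHom (algebraMap K A))).isUnit_of_dvd' hdvd dvd_rfl)
    have hp : (p.map (algebraMap K A)).natDegree = 0 := by
      rw [sub_eq_zero.mp h]
      exact natDegree_C_mul_le c _ |>.trans hq.le |> Nat.le_zero.mp
    rw [natDegree_map] at hp hq
    omega

lemma natDegree_ratFiberPoly_le (hdeg : max p.natDegree q.natDegree = d) (t : P1 A) :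
    (ratFiberPoly p q A t).natDegree ≤ d := by
  cases t with
  | none => simp only [ratFiberPoly, natDegree_map]; omega
  | some c =>
    refine (natDegree_sub_le _ _).trans (max_le ?_ ((natDegree_C_mul_le _ _).trans ?_)) <;>
      rw [natDegree_map] <;> omega

lemma ratFiberPoly_isRoot {t : P1 A} {x : A} (hx : ratAct p q A (some x) = t) :
    (ratFiberPoly p q A t).IsRoot x := by
  by_cases hq : aeval x q = 0
  · simp only [ratAct, hq, if_true] at hx
    subst hx
    simpa [ratFiberPoly, eval_map_algebraMap] using hq
  · simp only [ratAct, hq, if_false] at hx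
    subst hx
    simp [ratFiberPoly, eval_map_algebraMap, div_mul_cancel₀ _ hq]

lemma natDegree_ratFiberPoly_lt (hd : 0 < d) (hf : IsCoprime p q)
    (hdeg : max p.natDegree q.natDegree = d) {t : P1 A} (ht : ratAct p q A none = t) :
    (ratFiberPoly p q A t).natDegree < d := by
  rw [ratAct] at ht
  split_ifs at ht with hqp hpq <;> subst ht
  · simp only [ratFiberPoly, natDegree_map]
    omega
  · simp only [ratFiberPoly, map_zero, zero_mul, sub_zero, natDegree_map]
    omega
  -- equal degrees: the leading coefficients cancel
  have hpd : p.natDegree = d := by omega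
  have hqd : q.natDegree = d := by omega
  have hq : algebraMap K A q.leadingCoeff ≠ 0 := by
    rw [_root_.map_ne_zero, leadingCoeff_ne_zero]
    rintro rfl
    simp at hqd
    omega
  set c := algebraMap K A (p.leadingCoeff / q.leadingCoeff)
  have hcoeff : (ratFiberPoly p q A (some c)).coeff d = 0 := by
    have hp : p.coeff d = p.leadingCoeff := by rw [leadingCoeff, hpd]
    have hq' : q.coeff d = q.leadingCoeff := by rw [leadingCoeff, hqd]
    simp only [ratFiberPoly, c, coeff_sub, coeff_C_mul, coeff_map, hp, hq', map_div₀,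
      div_mul_cancel₀ _ hq, sub_self]
  refine lt_of_le_of_ne (natDegree_ratFiberPoly_le hdeg _) fun h =>
    ratFiberPoly_ne_zero hd hf hdeg (some c) ?_
  rw [← leadingCoeff_eq_zero, leadingCoeff, h, hcoeff]

lemma ratAct_fiber_encard_le (hd : 0 < d) (hf : IsCoprime p q)
    (hdeg : max p.natDegree q.natDegree = d) (t : P1 A) :
    (ratAct p q A ⁻¹' {t}).encard ≤ d := by
  set r := ratFiberPoly p q A t
  set S : Finset (P1 A) := r.roots.toFinset.image some
  have hS : S.card ≤ r.natDegree :=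
    Finset.card_image_le.trans (r.roots.toFinset_card_le.trans (card_roots' r))
  have hfiber : ratAct p q A ⁻¹' {t} ⊆ insert none S := by
    rintro (_ | x) hx
    · exact Set.mem_insert _ _
    · refine Set.mem_insert_of_mem _ (Finset.mem_image_of_mem _ ?_)
      rw [Multiset.mem_toFinset, mem_roots (ratFiberPoly_ne_zero hd hf hdeg t)]
      exact ratFiberPoly_isRoot hx
  by_cases hnone : ratAct p q A none = t
  · calc (ratAct p q A ⁻¹' {t}).encard ≤ S.card + 1 :=
          (Set.encard_le_encard hfiber).trans ((Set.encard_insert_le _ _).trans_eq (by simp))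
      _ ≤ d := by
          have : r.natDegree < d := natDegree_ratFiberPoly_lt hd hf hdeg hnone
          exact_mod_cast (by omega : S.card + 1 ≤ d)
  · have hfiber' : ratAct p q A ⁻¹' {t} ⊆ S := fun x hx =>
      (hfiber hx).resolve_left (by rintro rfl; exact hnone hx)
    calc (ratAct p q A ⁻¹' {t}).encard ≤ S.card :=
          (Set.encard_le_encard hfiber').trans_eq (Set.encard_coe_eq_coe_finsetCard S)
      _ ≤ d := by exact_mod_cast hS.trans (natDegree_ratFiberPoly_le hdeg t)

end RationalMap

section Dimension

open Filter

lemma limsup_le_mul_sum_limsup {ι : Type*} (s : Finset ι) {u : ℕ → ℝ} {v : ι → ℕ → ℝ} {c : ℝ}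
    (hc : 0 ≤ c) (hu : IsCoboundedUnder (· ≤ ·) atTop u)
    (hv : ∀ i ∈ s, IsBoundedUnder (· ≤ ·) atTop (v i))
    (h : ∀ᶠ n in atTop, u n ≤ c * ∑ i ∈ s, v i n) :
    limsup u atTop ≤ c * ∑ i ∈ s, limsup (v i) atTop := by
  refine le_of_forall_pos_le_add fun ε hε => ?_
  set δ := ε / (c * s.card + 1)
  have hδ : c * s.card * δ ≤ ε := by
    rw [mul_div_assoc', div_le_iff₀ (by positivity)]
    nlinarith
  have hv' : ∀ᶠ n in atTop, ∀ i ∈ s, v i n < limsup (v i) atTop + δ :=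
    (eventually_all_finset s).mpr fun i hi =>
      eventually_lt_of_limsup_lt (lt_add_of_pos_right _ (by positivity)) (hv i hi)
  refine limsup_le_of_le hu ((h.and hv').mono fun n ⟨hn, hvn⟩ => hn.trans ?_)
  calc c * ∑ i ∈ s, v i n ≤ c * ∑ i ∈ s, (limsup (v i) atTop + δ) :=
        mul_le_mul_of_nonneg_left (Finset.sum_le_sum fun i hi => (hvn i hi).le) hc
    _ = c * ∑ i ∈ s, limsup (v i) atTop + c * s.card * δ := by
        rw [Finset.sum_add_distrib, Finset.sum_const, nsmul_eq_mul]
        ring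
    _ ≤ c * ∑ i ∈ s, limsup (v i) atTop + ε := by linarith

lemma log_natCast_le_log_natCast {m n : ℕ} (h : m ≤ n) : Real.log m ≤ Real.log n := by
  rcases m.eq_zero_or_pos with rfl | hm
  · simpa using Real.log_natCast_nonneg n
  · exact Real.log_le_log (by exact_mod_cast hm) (by exact_mod_cast h)

variable {V : ℕ → Type*} {d : ℕ}

/-- `log N_{ε_n}(G) / log (1/ε_n)`, with `N_{ε_n}(G)` and `ε_n` in closed form. -/
def levelRatio (d : ℕ) (G : Set (∀ k, Equiv.Perm (V k))) (n : ℕ) : ℝ :=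
  Real.log (levelCard G n) / (scaleExp d n * Real.log d.factorial)

lemma dimUpper_eq_limsup_levelRatio (hd : 2 ≤ d) [Subsingleton (V 0)]
    (G : Set (∀ k, Equiv.Perm (V k))) :
    dimUpper d G = limsup (levelRatio d G) atTop := by
  unfold dimUpper levelRatio
  simp only [coverNum_eq_levelCard hd, treeScale, one_div, inv_inv, Real.log_pow]

lemma levelRatio_nonneg (G : Set (∀ k, Equiv.Perm (V k))) (n : ℕ) : 0 ≤ levelRatio d G n :=
  div_nonneg (Real.log_natCast_nonneg _)
    (mul_nonneg (Nat.cast_nonneg _) (Real.log_natCast_nonneg _))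

lemma log_factorial_pos (hd : 2 ≤ d) : 0 < Real.log d.factorial :=
  Real.log_pos (by exact_mod_cast (Nat.lt_of_lt_of_le hd (Nat.self_le_factorial d)))

lemma levelRatio_le (hd : 2 ≤ d) {G : Set (∀ k, Equiv.Perm (V k))} {n : ℕ}
    (h : levelCard G n ≤ d ^ (d * scaleExp d n)) :
    levelRatio d G n ≤ d * Real.log d / Real.log d.factorial := by
  have hfact := log_factorial_pos hd
  refine div_le_of_le_mul₀ (by positivity) (by positivity) ?_
  calc Real.log (levelCard G n) ≤ Real.log ((d ^ (d * scaleExp d n) : ℕ) : ℝ) :=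
        log_natCast_le_log_natCast h
    _ = d * Real.log d / Real.log d.factorial * (scaleExp d n * Real.log d.factorial) := by
        rw [Nat.cast_pow, Real.log_pow]
        field_simp
        push_cast
        ring

lemma levelRatio_succ_le {ι : Type*} {W : ι → ℕ → Type*} (hd : 2 ≤ d) {n : ℕ} (hn : 1 ≤ n)
    {G : Set (∀ k, Equiv.Perm (V k))} {H : ∀ i, Set (∀ k, Equiv.Perm (W i k))} {s : Finset ι}
    (hH : ∀ i ∈ s, 0 < levelCard (H i) n) (h : levelCard G (n + 1) ≤ ∏ i ∈ s, levelCard (H i) n) :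
    levelRatio d G (n + 1) ≤ 1 / d * ∑ i ∈ s, levelRatio d (H i) n := by
  have hfact := log_factorial_pos hd
  have hS : (0 : ℝ) < scaleExp d n := by exact_mod_cast scaleExp_pos hn
  have hd' : (0 : ℝ) < d := by exact_mod_cast (by omega : 0 < d)
  have hS' : (d : ℝ) * scaleExp d n ≤ scaleExp d (n + 1) := by
    rw [scaleExp_succ']
    push_cast
    linarith
  have hlog : Real.log (levelCard G (n + 1)) ≤ ∑ i ∈ s, Real.log (levelCard (H i) n) := by
    rw [← Real.log_prod fun i hi => by exact_mod_cast (hH i hi).ne']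
    exact_mod_cast log_natCast_le_log_natCast h
  unfold levelRatio
  calc Real.log (levelCard G (n + 1)) / (scaleExp d (n + 1) * Real.log d.factorial)
      ≤ (∑ i ∈ s, Real.log (levelCard (H i) n)) / (scaleExp d (n + 1) * Real.log d.factorial) :=
        div_le_div_of_nonneg_right hlog (by positivity)
    _ ≤ (∑ i ∈ s, Real.log (levelCard (H i) n)) / (d * scaleExp d n * Real.log d.factorial) :=
        div_le_div_of_nonneg_left (Finset.sum_nonneg fun i _ => Real.log_natCast_nonneg _)
          (by positivity) (by gcongr)
    _ = 1 / d * ∑ i ∈ s, Real.log (levelCard (H i) n) / (scaleExp d n * Real.log d.factorial) := by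
        rw [Finset.sum_div, Finset.mul_sum]
        refine Finset.sum_congr rfl fun i _ => ?_
        field_simp

end Dimension

theorem arboreal_pullback_bound_general {K : Type*} [Field K] {d : ℕ}
    (hd : 2 ≤ d) (p q : Polynomial K) (hf : IsCoprime p q)
    (hdeg : max p.natDegree q.natDegree = d) (α : P1 K)
    (hrat : ∀ β : P1 (Kbar K), ratAct p q (Kbar K) β = P1K α → β ∈ P1Rat (K := K) ⊥) :
    dimUpper d (arbGal (K := K) galP1 ⊥ (ratAct p q (Kbar K)) (P1K α)) ≤
      (1 / (d : ℝ)) * ∑ᶠ β ∈ {β : P1 (Kbar K) | ratAct p q (Kbar K) β = P1K α},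
        dimUpper d (arbGal (K := K) galP1 ⊥ (ratAct p q (Kbar K)) β) := by
  have hφ := commute_ratAct_galP1 p q
  have hfib := ratAct_fiber_encard_le (A := Kbar K) (by omega) hf hdeg
  have := fun β => finite_preV_s11 hfib (a := β)
  have hfin : {β | ratAct p q (Kbar K) β = P1K α}.Finite :=
    Set.finite_of_encard_le_coe (hfib (P1K α))
  simp only [dimUpper_eq_limsup_levelRatio hd]
  rw [finsum_mem_eq_finite_toFinset_sum _ hfin, ← Filter.limsup_nat_add _ 1]
  refine limsup_le_mul_sum_limsup _ (by positivity)
    (Filter.isCoboundedUnder_le_of_le _ fun n => levelRatio_nonneg _ _) (fun β _ => ?_)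
    ((Filter.eventually_ge_atTop 1).mono fun n hn => levelRatio_succ_le hd hn
      (fun β _ => levelCard_pos hfib (arbGal_nonempty β) n) ?_)
  · exact Filter.isBoundedUnder_of ⟨_, fun n => levelRatio_le hd
      (levelCard_le_pow hfib (fun g hg => commutesWithParent_of_mem_arbGal hφ hg) n)⟩
  · exact levelCard_arbGal_succ_le_prod hφ (fun β hβ => hfin.mem_toFinset.mpr hβ)
      (fun β hβ => hrat β (hfin.mem_toFinset.mp hβ)) n

theorem arboreal_pullback_bound {K : Type*} [Field K] [NumberField K] {d : ℕ}
    (hd : 2 ≤ d) (p q : Polynomial K) (hf : IsCoprime p q)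
    (hdeg : max p.natDegree q.natDegree = d) (α : P1 K)
    (hrat : ∀ β : P1 (Kbar K), ratAct p q (Kbar K) β = P1K α → β ∈ P1Rat (K := K) ⊥) :
    dimUpper d (arbGal (K := K) galP1 ⊥ (ratAct p q (Kbar K)) (P1K α)) ≤
      (1 / (d : ℝ)) * ∑ᶠ β ∈ {β : P1 (Kbar K) | ratAct p q (Kbar K) β = P1K α},
        dimUpper d (arbGal (K := K) galP1 ⊥ (ratAct p q (Kbar K)) β) :=
  arboreal_pullback_bound_general hd p q hf hdeg α hrat
end
end
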